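/- Let Γ be a connected locally finite graph and H ≤ Aut(Γ) with finitely many orbits on VΓ. If all point stabilisers of H are finite, then all point stabilisers of the normaliser N_{Aut(Γ)}(H) are finite. -/

import Mathlib

/-- The automorphism group of a simple graph `Γ`, as a subgroup of `Sym(V)`. -/
def autSub {V : Type*} (Γ : SimpleGraph V) : Subgroup (Equiv.Perm V) where
  carrier := {g | ∀ a b : V, Γ.Adj (g a) (g b) ↔ Γ.Adj a b}
  one_mem' := by intro a b; simp
  mul_mem' := by
    intro x y hx hy a b
    simpa [Equiv.Perm.mul_apply] using (hx (y a) (y b)).trans (hy a b)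
  inv_mem' := by
    intro g hg a b
    rw [← hg (g⁻¹ a) (g⁻¹ b)]
    simp

lemma aut_dist_le {V : Type*} {Γ : SimpleGraph V} (hconn : Γ.Connected) {g : Equiv.Perm V}
    (hg : g ∈ autSub Γ) (a b : V) : Γ.dist (g a) (g b) ≤ Γ.dist a b := by
  obtain ⟨p, hp⟩ := (hconn a b).exists_walk_length_eq_dist
  let f : Γ →g Γ := ⟨(g : V → V), fun h => (hg _ _).mpr h⟩
  calc Γ.dist (g a) (g b) ≤ (p.map f).length := Γ.dist_le _
    _ = p.length := SimpleGraph.Walk.length_map _ _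
    _ = Γ.dist a b := hp

lemma aut_dist {V : Type*} {Γ : SimpleGraph V} (hconn : Γ.Connected) {g : Equiv.Perm V}
    (hg : g ∈ autSub Γ) (a b : V) : Γ.dist (g a) (g b) = Γ.dist a b := by
  refine le_antisymm (aut_dist_le hconn hg a b) ?_
  have := aut_dist_le hconn (inv_mem hg) (g a) (g b)
  simpa using this

lemma ball_finite {V : Type*} {Γ : SimpleGraph V} (hconn : Γ.Connected)
    (hlf : ∀ v : V, (Γ.neighborSet v).Finite) (v : V) (n : ℕ) :
    {u : V | Γ.dist v u ≤ n}.Finite := by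
  induction n with
  | zero =>
    refine (Set.finite_singleton v).subset ?_
    intro u hu
    simp only [Set.mem_setOf_eq, Nat.le_zero] at hu
    simp [(hconn.dist_eq_zero_iff.mp hu).symm]
  | succ n ih =>
    refine (ih.union (ih.biUnion (fun w _ => hlf w))).subset ?_
    intro u hu
    simp only [Set.mem_setOf_eq] at hu
    rcases Nat.lt_or_ge (Γ.dist v u) (n+1) with h | h
    · exact Or.inl (Nat.lt_succ_iff.mp h)
    · have hd : Γ.dist v u = n + 1 := le_antisymm hu h
      obtain ⟨p, hp⟩ := (hconn v u).exists_walk_length_eq_dist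
      have hq : p.reverse.length = n + 1 := by rw [SimpleGraph.Walk.length_reverse, hp, hd]
      cases hrev : p.reverse with
      | nil => rw [hrev] at hq; simp at hq
      | cons hadj q =>
        rw [hrev] at hq
        simp only [SimpleGraph.Walk.length_cons, Nat.add_right_cancel_iff] at hq
        right
        refine Set.mem_biUnion (s := {u : V | Γ.dist v u ≤ n}) ?_ hadj.symm
        calc Γ.dist v _ ≤ q.reverse.length := Γ.dist_le _
          _ = n := by rw [SimpleGraph.Walk.length_reverse, hq]

lemma fiber_finite {V : Type*} (H : Subgroup (Equiv.Perm V)) (v w : V)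
    (hstab : {h : Equiv.Perm V | h ∈ H ∧ h v = v}.Finite) :
    {h : Equiv.Perm V | h ∈ H ∧ h v = w}.Finite := by
  rcases Set.eq_empty_or_nonempty {h : Equiv.Perm V | h ∈ H ∧ h v = w} with he | ⟨h₀, h₀H, h₀w⟩
  · rw [he]; exact Set.finite_empty
  · refine ((hstab.image (fun x => h₀ * x))).subset ?_
    rintro h ⟨hh, hw⟩
    refine ⟨h₀⁻¹ * h, ⟨mul_mem (inv_mem h₀H) hh, ?_⟩, by group⟩
    have : h₀⁻¹ w = v := by rw [← h₀w]; simp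
    simp [Equiv.Perm.mul_apply, hw, this]

/-- Let `Γ` be a connected locally finite graph and `H ≤ Aut(Γ)` with finitely many
orbits on `VΓ`.  If all point stabilisers of `H` are finite, then all point stabilisers
of the normaliser `N_{Aut(Γ)}(H)` are finite. -/
theorem stmt10 {V : Type*} (Γ : SimpleGraph V) (hconn : Γ.Connected)
    (hlf : ∀ v : V, (Γ.neighborSet v).Finite)
    (H : Subgroup (Equiv.Perm V)) (hH : H ≤ autSub Γ)
    (horb : ∃ S : Finset V, ∀ v : V, ∃ s ∈ S, ∃ h ∈ H, h s = v)
    (hstab : ∀ v : V, {h : Equiv.Perm V | h ∈ H ∧ h v = v}.Finite) :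
    ∀ v : V,
      {g : Equiv.Perm V | g ∈ autSub Γ ⊓ Subgroup.normalizer (H : Set (Equiv.Perm V)) ∧ g v = v}.Finite := by
  intro v
  obtain ⟨S, hS⟩ := horb
  set R := S.sup (fun s => Γ.dist v s) with hR
  -- cocompactness: every vertex is within distance R of the orbit of v
  have hcov : ∀ u : V, ∃ h : Equiv.Perm V, h ∈ H ∧ Γ.dist (h v) u ≤ R := by
    intro u
    obtain ⟨s, hs, h, hh, hhs⟩ := hS u
    refine ⟨h, hh, ?_⟩
    rw [← hhs, aut_dist hconn (hH hh)]
    exact Finset.le_sup hs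
  -- the finite generating set
  set F := {h : Equiv.Perm V | h ∈ H ∧ Γ.dist v (h v) ≤ 2 * R + 1} with hFdef
  have hFfin : F.Finite := by
    refine (((ball_finite hconn hlf v (2 * R + 1)).biUnion
      (fun w _ => fiber_finite H v w (hstab v)))).subset ?_
    rintro h ⟨hh, hd⟩
    exact Set.mem_biUnion hd ⟨hh, rfl⟩
  -- F generates H
  have key : ∀ (a b : V) (p : Γ.Walk a b) (h₁ h₂ : Equiv.Perm V), h₁ ∈ H → h₂ ∈ H →
      Γ.dist (h₁ v) a ≤ R → Γ.dist (h₂ v) b ≤ R → h₁⁻¹ * h₂ ∈ Subgroup.closure F := by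
    intro a b p
    induction p with
    | nil =>
      intro h₁ h₂ m1 m2 d1 d2
      apply Subgroup.subset_closure
      refine ⟨mul_mem (inv_mem m1) m2, ?_⟩
      have e1 : Γ.dist v ((h₁⁻¹ * h₂) v) = Γ.dist (h₁ v) (h₂ v) := by
        have := aut_dist hconn (hH m1) v ((h₁⁻¹ * h₂) v)
        simpa [Equiv.Perm.mul_apply] using this.symm
      rw [e1]
      calc Γ.dist (h₁ v) (h₂ v) ≤ Γ.dist (h₁ v) _ + Γ.dist _ (h₂ v) := hconn.dist_triangle
        _ ≤ R + R := by
            refine add_le_add d1 ?_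
            rw [SimpleGraph.dist_comm]; exact d2
        _ ≤ 2 * R + 1 := by omega
    | @cons a c b hadj p ih =>
      intro h₁ h₂ m1 m2 d1 d2
      obtain ⟨h₃, m3, d3⟩ := hcov c
      have e : h₁⁻¹ * h₂ = (h₁⁻¹ * h₃) * (h₃⁻¹ * h₂) := by group
      rw [e]
      refine mul_mem ?_ (ih h₃ h₂ m3 m2 ?_ d2)
      · apply Subgroup.subset_closure
        refine ⟨mul_mem (inv_mem m1) m3, ?_⟩
        have e1 : Γ.dist v ((h₁⁻¹ * h₃) v) = Γ.dist (h₁ v) (h₃ v) := by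
          have := aut_dist hconn (hH m1) v ((h₁⁻¹ * h₃) v)
          simpa [Equiv.Perm.mul_apply] using this.symm
        rw [e1]
        have hac : Γ.dist a c ≤ 1 := by
          have := Γ.dist_le (SimpleGraph.Walk.cons hadj SimpleGraph.Walk.nil)
          simpa using this
        calc Γ.dist (h₁ v) (h₃ v)
            ≤ Γ.dist (h₁ v) a + Γ.dist a (h₃ v) := hconn.dist_triangle
          _ ≤ Γ.dist (h₁ v) a + (Γ.dist a c + Γ.dist c (h₃ v)) :=
              add_le_add_right hconn.dist_triangle _
          _ ≤ R + (1 + R) := by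
              refine add_le_add d1 (add_le_add hac ?_)
              rw [SimpleGraph.dist_comm]; exact d3
          _ ≤ 2 * R + 1 := by omega
      · exact d3
  have hgen : ∀ h : Equiv.Perm V, h ∈ H → h ∈ Subgroup.closure F := by
    intro h hh
    obtain ⟨p⟩ := hconn.preconnected v (h v)
    have := key v (h v) p 1 h (one_mem H) hh (by simp [SimpleGraph.dist_self]) (by simp [SimpleGraph.dist_self])
    simpa using this
  -- the ball
  set B := {u : V | Γ.dist v u ≤ R} with hBdef
  have hBfin : B.Finite := ball_finite hconn hlf v R
  haveI := hBfin.to_subtype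
  haveI := hFfin.to_subtype
  -- the injection
  set T := {g : Equiv.Perm V | g ∈ autSub Γ ⊓ Subgroup.normalizer (H : Set (Equiv.Perm V)) ∧ g v = v} with hTdef
  have hmemB : ∀ (g : Equiv.Perm V), g ∈ T → ∀ w ∈ B, g w ∈ B := by
    rintro g ⟨⟨gaut, _⟩, gv⟩ w hw
    have : Γ.dist v (g w) = Γ.dist v w := by
      conv_lhs => rw [← gv]
      exact aut_dist hconn gaut v w
    simpa [hBdef, this] using hw
  have hmemF : ∀ (g : Equiv.Perm V), g ∈ T → ∀ h ∈ F, g * h * g⁻¹ ∈ F := by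
    rintro g ⟨⟨gaut, gnorm⟩, gv⟩ h ⟨hh, hd⟩
    refine ⟨(Subgroup.mem_normalizer_iff.mp gnorm h).mp hh, ?_⟩
    have hg'v : g⁻¹ v = v := by conv_lhs => rw [← gv]; simp
    have : (g * h * g⁻¹) v = g (h v) := by
      simp [Equiv.Perm.mul_apply, hg'v]
    rw [this]
    have e : Γ.dist v (g (h v)) = Γ.dist v (h v) := by
      have e' := aut_dist hconn gaut v (h v)
      rw [gv] at e'
      exact e'
    rw [e]; exact hd
  let Φ : T → (B → B) × (F → F) := fun g =>
    (fun w => ⟨g.1 w.1, hmemB g.1 g.2 w.1 w.2⟩,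
     fun h => ⟨g.1 * h.1 * g.1⁻¹, hmemF g.1 g.2 h.1 h.2⟩)
  have hΦ : Function.Injective Φ := by
    rintro ⟨g₁, hg₁⟩ ⟨g₂, hg₂⟩ heq
    simp only [Φ, Prod.mk.injEq] at heq
    obtain ⟨heqB, heqF⟩ := heq
    have hB' : ∀ w ∈ B, g₁ w = g₂ w := by
      intro w hw
      have := congrFun heqB ⟨w, hw⟩
      exact congrArg Subtype.val this
    have hF' : ∀ h ∈ F, g₁ * h * g₁⁻¹ = g₂ * h * g₂⁻¹ := by
      intro h hh
      have := congrFun heqF ⟨h, hh⟩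
      exact congrArg Subtype.val this
    -- g₁⁻¹ * g₂ commutes with every element of F, hence of H
    have hcomm : ∀ h : Equiv.Perm V, h ∈ H → h * (g₁⁻¹ * g₂) = (g₁⁻¹ * g₂) * h := by
      have hle : Subgroup.closure F ≤ Subgroup.centralizer {g₁⁻¹ * g₂} := by
        rw [Subgroup.closure_le]
        intro h hh
        rw [SetLike.mem_coe, Subgroup.mem_centralizer_iff]
        rintro x rfl
        have e2 : (g₁⁻¹ * g₂) * h * (g₁⁻¹ * g₂)⁻¹ = h := by
          have := congrArg (fun x => g₁⁻¹ * x * g₁) (hF' h hh)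
          simp only [mul_inv_rev, inv_inv] at this ⊢
          calc g₁⁻¹ * g₂ * h * (g₂⁻¹ * g₁)
              = g₁⁻¹ * (g₂ * h * g₂⁻¹) * g₁ := by group
            _ = g₁⁻¹ * (g₁ * h * g₁⁻¹) * g₁ := by rw [← hF' h hh]
            _ = h := by group
        calc (g₁⁻¹ * g₂) * h = ((g₁⁻¹ * g₂) * h * (g₁⁻¹ * g₂)⁻¹) * (g₁⁻¹ * g₂) := by group
          _ = h * (g₁⁻¹ * g₂) := by rw [e2]
      intro h hh
      have := hle (hgen h hh)
      exact (Subgroup.mem_centralizer_iff.mp this (g₁⁻¹ * g₂) rfl).symm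
    have hfix : ∀ u : V, g₁ u = g₂ u := by
      intro u
      obtain ⟨h, hh, hd⟩ := hcov u
      set w := h⁻¹ u with hw
      have hwB : w ∈ B := by
        have : Γ.dist (h⁻¹ (h v)) (h⁻¹ u) = Γ.dist (h v) u :=
          aut_dist hconn (inv_mem (hH hh)) (h v) u
        rw [show h⁻¹ (h v) = v by simp] at this
        show Γ.dist v w ≤ R; rw [hw, this]; exact hd
      have hu : u = h w := by simp [hw]
      set a := g₁⁻¹ * g₂ with ha
      have haw : a w = w := by
        have := hB' w hwB
        simp [ha, Equiv.Perm.mul_apply, ← this]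
      have : a u = u := by
        rw [hu]
        calc a (h w) = (a * h) w := by simp [Equiv.Perm.mul_apply]
          _ = (h * a) w := by rw [← hcomm h hh]
          _ = h (a w) := by simp [Equiv.Perm.mul_apply]
          _ = h w := by rw [haw]
      have : g₂ u = g₁ u := by
        have e := congrArg g₁ this
        simpa [ha, Equiv.Perm.mul_apply] using e
      exact this.symm
    exact Subtype.ext (Equiv.ext hfix)
  exact Set.finite_coe_iff.mp (Finite.of_injective Φ hΦ)
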